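/- arXiv:2410.16023 — 2 statements merged into one kernel-verified Lean document; each statement's English description precedes it below -/
import Mathlib

section
/- Let G be a finite simple graph with star number γ(G) = k, and let G' be the graph obtained from G by adding one new vertex adjacent to every vertex of G (a universal vertex). Then γ(G') ≤ k + 1. -/
open SimpleGraph

/-- A `k`-witness for a simple graph `G`: a positive weight function `w` on the vertices
together with `k` increasingly ordered intervals `[a i, b i]` of positive reals such that
two distinct vertices are adjacent iff the sum of their weights lies in ⋃ i, [a i, b i]. -/
structure StarWitness {V : Type*} (G : SimpleGraph V) (k : ℕ) where
  w : V → ℝ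
  a : Fin k → ℝ
  b : Fin k → ℝ
  w_pos : ∀ v, 0 < w v
  a_pos : ∀ i, 0 < a i
  a_le_b : ∀ i, a i ≤ b i
  ordered : ∀ i j : Fin k, i < j → b i < a j
  adj_iff : ∀ u v : V, u ≠ v →
    (G.Adj u v ↔ ∃ i : Fin k, a i ≤ w u + w v ∧ w u + w v ≤ b i)

/-- The star number `γ(G)` of a graph `G`: the smallest positive integer `k` such that
`G` admits a `k`-witness (i.e. `G` is a star-`k`-PCG). -/
noncomputable def starNumber {V : Type*} (G : SimpleGraph V) : ℕ :=
  sInf {k | 0 < k ∧ Nonempty (StarWitness G k)}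

/-- A witness is left-free if the weight of every non-edge exceeds `b 1` (the right endpoint
of the first interval). -/
def StarWitness.LeftFree {V : Type*} {G : SimpleGraph V} {k : ℕ}
    (W : StarWitness G k) : Prop :=
  ∀ u v : V, u ≠ v → ¬ G.Adj u v → ∀ i : Fin k, (i : ℕ) = 0 → W.b i < W.w u + W.w v

/-- A witness is right-free if the weight of every non-edge is below `a k` (the left endpoint
of the last interval). -/
def StarWitness.RightFree {V : Type*} {G : SimpleGraph V} {k : ℕ}
    (W : StarWitness G k) : Prop :=
  ∀ u v : V, u ≠ v → ¬ G.Adj u v → ∀ i : Fin k, (i : ℕ) = k - 1 → W.w u + W.w v < W.a i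

/-- A witness is in normal form if all weights are pairwise distinct and no doubled weight
equals the sum of the weights of two distinct vertices. -/
def StarWitness.NormalForm {V : Type*} {G : SimpleGraph V} {k : ℕ}
    (W : StarWitness G k) : Prop :=
  Function.Injective W.w ∧
    ∀ x u₁ u₂ : V, u₁ ≠ u₂ → 2 * W.w x ≠ W.w u₁ + W.w u₂

/-- The graph obtained from `G` by adding one new universal vertex (`none`). -/
def addUniversal {V : Type*} (G : SimpleGraph V) : SimpleGraph (Option V) where
  Adj x y :=
    match x, y with
    | some u, some v => G.Adj u v
    | some _, none => True
    | none, some _ => True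
    | none, none => False
  symm := by
    constructor
    rintro (_ | u) (_ | v) h
    · exact h
    · trivial
    · trivial
    · exact h.symm
  loopless := by
    constructor
    rintro (_ | u) h
    · exact h
    · exact G.irrefl h

/-!
A witness of `G` restricts to a witness of any induced subgraph, so `G` has a witness
whenever `G'` does, and otherwise `γ(G') = sInf ∅ = 0`. Given a `k`-witness of `G`, pick
`C > 0` exceeding every weight and every interval endpoint. Giving the new vertex weight `2C`
and appending the interval `[2C, 3C]` yields a `(k+1)`-witness of `G'`: the new vertex's sums
`2C + w v` fall in `(2C, 3C)`, while every old sum and every old interval lies below `2C`.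
-/

section

variable {V W : Type*} {G : SimpleGraph V} {H : SimpleGraph W} {k : ℕ}

lemma starNumber_le (hk : 0 < k) (S : StarWitness G k) : starNumber G ≤ k :=
  Nat.sInf_le (s := {m | 0 < m ∧ Nonempty (StarWitness G m)}) ⟨hk, ⟨S⟩⟩

lemma starNumber_pos (hk : 0 < k) (S : StarWitness G k) : 0 < starNumber G :=
  (Nat.sInf_mem (s := {m | 0 < m ∧ Nonempty (StarWitness G m)}) ⟨k, hk, ⟨S⟩⟩).1

lemma nonempty_starWitness_starNumber (hG : 0 < starNumber G) :
    Nonempty (StarWitness G (starNumber G)) :=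
  (Nat.sInf_mem (Nat.nonempty_of_pos_sInf hG)).2

def StarWitness.comap (f : H ↪g G) (S : StarWitness G k) : StarWitness H k where
  w := S.w ∘ f
  a := S.a
  b := S.b
  w_pos v := S.w_pos (f v)
  a_pos := S.a_pos
  a_le_b := S.a_le_b
  ordered := S.ordered
  adj_iff _ _ huv := f.map_adj_iff.symm.trans (S.adj_iff _ _ (f.injective.ne huv))

def addUniversalEmbedding (G : SimpleGraph V) : G ↪g addUniversal G where
  toFun := some
  inj' := Option.some_injective V
  map_rel_iff' := Iff.rfl

lemma StarWitness.exists_bound [Finite V] (S : StarWitness G k) :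
    ∃ C, 0 < C ∧ (∀ v, S.w v < C) ∧ ∀ i, S.b i < C := by
  obtain ⟨B₁, hB₁⟩ := Finite.exists_le S.w
  obtain ⟨B₂, hB₂⟩ := Finite.exists_le S.b
  refine ⟨max (max B₁ B₂) 0 + 1, by positivity, fun v => ?_, fun i => ?_⟩
  · linarith [hB₁ v, le_max_left B₁ B₂, le_max_left (max B₁ B₂) 0]
  · linarith [hB₂ i, le_max_right B₁ B₂, le_max_left (max B₁ B₂) 0]

lemma Fin.snoc_lt_snoc {α : Type*} [Preorder α] {n : ℕ} {f g : Fin n → α} {x y : α}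
    (hfg : ∀ i j, i < j → f i < g j) (hf : ∀ i, f i < y) :
    ∀ i j : Fin (n + 1), i < j →
      Fin.snoc (α := fun _ => α) f x i < Fin.snoc (α := fun _ => α) g y j := by
  intro i j hij
  induction j using Fin.lastCases with
  | last =>
    obtain ⟨i, rfl⟩ := Fin.exists_castSucc_eq.mpr hij.ne
    simpa using hf i
  | cast j =>
    obtain ⟨i, rfl⟩ := Fin.exists_castSucc_eq.mpr (hij.trans (Fin.castSucc_lt_last j)).ne
    simpa using hfg i j (Fin.castSucc_lt_castSucc_iff.mp hij)

def StarWitness.toAddUniversal (S : StarWitness G k) (C : ℝ) (hC : 0 < C)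
    (hw : ∀ v, S.w v < C) (hb : ∀ i, S.b i < C) :
    StarWitness (addUniversal G) (k + 1) where
  w o := o.elim (2 * C) S.w
  a := Fin.snoc S.a (2 * C)
  b := Fin.snoc S.b (3 * C)
  w_pos o := by
    cases o with
    | none => simpa using hC
    | some v => exact S.w_pos v
  a_pos := Fin.lastCases (by simpa using hC) (fun i => by simpa using S.a_pos i)
  a_le_b := Fin.lastCases (by simp only [Fin.snoc_last]; linarith) (fun i => by simpa using S.a_le_b i)
  ordered := Fin.snoc_lt_snoc S.ordered (fun i => by linarith [hb i])
  adj_iff := by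
    have new_sum (v : V) : ∃ i, Fin.snoc (α := fun _ => ℝ) S.a (2 * C) i ≤ 2 * C + S.w v ∧
        2 * C + S.w v ≤ Fin.snoc (α := fun _ => ℝ) S.b (3 * C) i :=
      ⟨Fin.last k, by simp only [Fin.snoc_last]; linarith [S.w_pos v],
        by simp only [Fin.snoc_last]; linarith [hw v]⟩
    rintro (_ | u) (_ | v) huv
    · exact absurd rfl huv
    · exact iff_of_true trivial (new_sum v)
    · exact iff_of_true trivial (by simpa [add_comm] using new_sum u)
    · refine (S.adj_iff u v (fun h => huv (congrArg some h))).trans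
        ⟨fun ⟨i, hi⟩ => ⟨i.castSucc, by simpa using hi⟩, fun ⟨i, hi⟩ => ?_⟩
      induction i using Fin.lastCases with
      | last =>
        simp only [Fin.snoc_last, Option.elim] at hi
        linarith [hi.1, hw u, hw v]
      | cast i => exact ⟨i, by simpa using hi⟩

lemma StarWitness.nonempty_addUniversal [Finite V] (S : StarWitness G k) :
    Nonempty (StarWitness (addUniversal G) (k + 1)) :=
  let ⟨C, hC, hw, hb⟩ := S.exists_bound
  ⟨S.toAddUniversal C hC hw hb⟩

end

/-- Theorem 9 (general case): adding a universal vertex increases the star number by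
at most one. -/
theorem stmt_8 {V : Type*} [Fintype V] (G : SimpleGraph V) (k : ℕ)
    (hg : starNumber G = k) :
    starNumber (addUniversal G) ≤ k + 1 := by
  subst hg
  rcases (starNumber (addUniversal G)).eq_zero_or_pos with h0 | hpos
  · rw [h0]
    exact Nat.zero_le _
  obtain ⟨S'⟩ := nonempty_starWitness_starNumber hpos
  obtain ⟨S⟩ := nonempty_starWitness_starNumber
    (starNumber_pos hpos (S'.comap (addUniversalEmbedding G)))
  obtain ⟨S''⟩ := S.nonempty_addUniversal
  exact starNumber_le (Nat.succ_pos _) S''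
end

section
/- Let G_1 and G_2 be finite simple graphs and let G_1 + G_2 denote their disjoint union. Then γ(G_1 + G_2) ≤ γ(G_1) + γ(G_2). -/
open SimpleGraph

/- Auxiliary: powers of three form a Sidon set. -/
lemma star_sidon_aux {i j k l : ℕ} (hij : i ≤ j) (hkl : k ≤ l)
    (h : 3^i + 3^j = 3^k + 3^l) : i = k ∧ j = l := by
  have hjl : j = l := by
    rcases lt_trichotomy j l with hlt | he | hlt
    · exfalso
      have h1 : 3^i + 3^j ≤ 2 * 3^j := by
        have := Nat.pow_le_pow_right (by norm_num : 1 ≤ 3) hij; omega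
      have h2 : 3 * 3^j ≤ 3^l := by
        calc 3 * 3^j = 3^(j+1) := by ring
        _ ≤ 3^l := Nat.pow_le_pow_right (by norm_num) hlt
      have h3 : 1 ≤ 3^j := Nat.one_le_pow _ _ (by norm_num)
      have h4 : 1 ≤ 3^k := Nat.one_le_pow _ _ (by norm_num)
      omega
    · exact he
    · exfalso
      have h1 : 3^k + 3^l ≤ 2 * 3^l := by
        have := Nat.pow_le_pow_right (by norm_num : 1 ≤ 3) hkl; omega
      have h2 : 3 * 3^l ≤ 3^j := by
        calc 3 * 3^l = 3^(l+1) := by ring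
        _ ≤ 3^j := Nat.pow_le_pow_right (by norm_num) hlt
      have h3 : 1 ≤ 3^l := Nat.one_le_pow _ _ (by norm_num)
      have h4 : 1 ≤ 3^i := Nat.one_le_pow _ _ (by norm_num)
      omega
  subst hjl
  have : (3:ℕ)^i = 3^k := by omega
  exact ⟨Nat.pow_right_injective (by norm_num) this, rfl⟩

lemma star_sidon {i j k l : ℕ} (h : 3^i + 3^j = 3^k + 3^l) :
    (i = k ∧ j = l) ∨ (i = l ∧ j = k) := by
  rcases le_total i j with hij | hij <;> rcases le_total k l with hkl | hkl
  · exact Or.inl (star_sidon_aux hij hkl h)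
  · have := star_sidon_aux hij hkl (by omega)
    exact Or.inr ⟨this.1, this.2⟩
  · have := star_sidon_aux hij hkl (by omega)
    exact Or.inr ⟨this.2, this.1⟩
  · have := star_sidon_aux hij hkl (by omega)
    exact Or.inl ⟨this.2, this.1⟩

/-- Every finite graph admits a star witness. -/
lemma star_exists_witness {V : Type*} [Fintype V] (G : SimpleGraph V) :
    ∃ k, 0 < k ∧ Nonempty (StarWitness G k) := by
  classical
  set n := Fintype.card V with hn
  set e : V ≃ Fin n := Fintype.equivFin V with he
  set w : V → ℝ := fun v => ((3 ^ ((e v : ℕ)) : ℕ) : ℝ) with hw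
  have hw_pos : ∀ v, 0 < w v := by
    intro v
    have : 0 < (3:ℕ) ^ ((e v : ℕ)) := by positivity
    simp only [hw]; exact_mod_cast this
  have hw_lt : ∀ v, w v < ((3 ^ n : ℕ) : ℝ) := by
    intro v
    have : (3:ℕ) ^ ((e v : ℕ)) < 3 ^ n :=
      Nat.pow_lt_pow_right (by norm_num) (e v).is_lt
    simp only [hw]; exact_mod_cast this
  -- the Sidon property for sums of weights
  have hsid : ∀ u v u' v' : V, u ≠ v → G.Adj u' v' →
      w u + w v = w u' + w v' → G.Adj u v := by
    intro u v u' v' huv hadj hsum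
    have hnat : (3:ℕ)^((e u : ℕ)) + 3^((e v : ℕ)) = 3^((e u' : ℕ)) + 3^((e v' : ℕ)) := by
      simp only [hw] at hsum; exact_mod_cast hsum
    have hfin : ∀ x y : V, (e x : ℕ) = (e y : ℕ) → x = y := by
      intro x y hxy
      exact e.injective (Fin.val_injective hxy)
    rcases star_sidon hnat with ⟨h1, h2⟩ | ⟨h1, h2⟩
    · rw [hfin _ _ h1, hfin _ _ h2]; exact hadj
    · rw [hfin _ _ h1, hfin _ _ h2]; exact hadj.symm
  set T : ℝ := ((2 * 3 ^ n + 1 : ℕ) : ℝ) with hT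
  set S : Finset ℝ :=
    insert T ((Finset.univ.filter (fun p : V × V => G.Adj p.1 p.2)).image
      (fun p => w p.1 + w p.2)) with hS
  have hTpos : 0 < T := by positivity
  have hsum_lt_T : ∀ u v : V, w u + w v < T := by
    intro u v
    have h1 := hw_lt u
    have h2 := hw_lt v
    have : ((3^n : ℕ) : ℝ) + ((3^n : ℕ) : ℝ) < T := by
      rw [hT]; push_cast; ring_nf; norm_num
    linarith
  have hSpos : ∀ x ∈ S, 0 < x := by
    intro x hx
    rcases Finset.mem_insert.mp hx with h | h
    · exact h ▸ hTpos
    · obtain ⟨p, _, rfl⟩ := Finset.mem_image.mp h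
      exact add_pos (hw_pos p.1) (hw_pos p.2)
  have hScard : 0 < S.card := Finset.card_pos.mpr ⟨T, Finset.mem_insert_self _ _⟩
  set iso := S.orderIsoOfFin rfl with hiso
  refine ⟨S.card, hScard, ⟨⟨w, fun i => (iso i : ℝ), fun i => (iso i : ℝ),
    hw_pos, fun i => hSpos _ (iso i).2, fun i => le_refl _, ?_, ?_⟩⟩⟩
  · intro i j hij
    exact_mod_cast iso.strictMono hij
  · intro u v huv
    constructor
    · intro hadj
      have hmem : w u + w v ∈ S := by
        refine Finset.mem_insert_of_mem (Finset.mem_image.mpr ⟨(u, v), ?_, rfl⟩)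
        simp [hadj]
      refine ⟨iso.symm ⟨_, hmem⟩, ?_, ?_⟩ <;>
        simp [OrderIso.apply_symm_apply]
    · rintro ⟨i, h1, h2⟩
      have heq : (iso i : ℝ) = w u + w v := le_antisymm h1 h2
      have hmem : (iso i : ℝ) ∈ S := (iso i).2
      rw [heq] at hmem
      rcases Finset.mem_insert.mp hmem with h | h
      · exact absurd h (ne_of_lt (hsum_lt_T u v))
      · obtain ⟨p, hp, hpe⟩ := Finset.mem_image.mp h
        have hadj : G.Adj p.1 p.2 := (Finset.mem_filter.mp hp).2
        exact hsid u v p.1 p.2 huv hadj hpe.symm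

/-- Combining witnesses for two graphs into a witness for their disjoint sum. -/
lemma star_combine {V₁ V₂ : Type*} [Fintype V₁] [Fintype V₂]
    {G₁ : SimpleGraph V₁} {G₂ : SimpleGraph V₂} {k₁ k₂ : ℕ}
    (W₁ : StarWitness G₁ k₁) (W₂ : StarWitness G₂ k₂) :
    Nonempty (StarWitness (G₁ ⊕g G₂) (k₁ + k₂)) := by
  obtain ⟨B₁, hB₁⟩ := Finite.exists_le W₁.w
  obtain ⟨B₂, hB₂⟩ := Finite.exists_le W₂.w
  obtain ⟨D, hD⟩ := Finite.exists_le W₁.b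
  set B : ℝ := max B₁ B₂ with hBdef
  have hB1 : ∀ u, W₁.w u ≤ B := fun u => (hB₁ u).trans (le_max_left _ _)
  have hB2 : ∀ v, W₂.w v ≤ B := fun v => (hB₂ v).trans (le_max_right _ _)
  set C : ℝ := max (max D (2 * B)) 0 + 1 with hCdef
  have hCpos : 0 < C := by
    have : (0:ℝ) ≤ max (max D (2*B)) 0 := le_max_right _ _
    linarith
  have hCD : ∀ i, W₁.b i < C := by
    intro i
    have h1 : W₁.b i ≤ D := hD i
    have h2 : D ≤ max (max D (2*B)) 0 := (le_max_left _ _).trans (le_max_left _ _)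
    linarith
  have hCB : 2 * B < C := by
    have : 2*B ≤ max (max D (2*B)) 0 := (le_max_right _ _).trans (le_max_left _ _)
    linarith
  set w : V₁ ⊕ V₂ → ℝ := Sum.elim W₁.w (fun v => W₂.w v + C) with hwdef
  set a : Fin (k₁ + k₂) → ℝ :=
    Fin.addCases (motive := fun _ => ℝ) W₁.a (fun j => W₂.a j + 2 * C) with hadef
  set b : Fin (k₁ + k₂) → ℝ :=
    Fin.addCases (motive := fun _ => ℝ) W₁.b (fun j => W₂.b j + 2 * C) with hbdef
  have ha_left : ∀ i : Fin k₁, a (Fin.castAdd k₂ i) = W₁.a i := by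
    intro i; simp [hadef]
  have ha_right : ∀ j : Fin k₂, a (Fin.natAdd k₁ j) = W₂.a j + 2 * C := by
    intro j; simp [hadef]
  have hb_left : ∀ i : Fin k₁, b (Fin.castAdd k₂ i) = W₁.b i := by
    intro i; simp [hbdef]
  have hb_right : ∀ j : Fin k₂, b (Fin.natAdd k₁ j) = W₂.b j + 2 * C := by
    intro j; simp [hbdef]
  refine ⟨⟨w, a, b, ?_, ?_, ?_, ?_, ?_⟩⟩
  · rintro (u | v)
    · exact W₁.w_pos u
    · have := W₂.w_pos v; simp only [hwdef, Sum.elim_inr]; linarith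
  · intro i
    refine Fin.addCases (fun i => ?_) (fun j => ?_) i
    · rw [ha_left]; exact W₁.a_pos i
    · rw [ha_right]; have := W₂.a_pos j; linarith
  · intro i
    refine Fin.addCases (fun i => ?_) (fun j => ?_) i
    · rw [ha_left, hb_left]; exact W₁.a_le_b i
    · rw [ha_right, hb_right]; have := W₂.a_le_b j; linarith
  · intro i j hij
    revert hij
    refine Fin.addCases (fun i' => ?_) (fun i' => ?_) i <;>
      refine Fin.addCases (fun j' => ?_) (fun j' => ?_) j <;>
      intro hij
    · rw [hb_left, ha_left]
      refine W₁.ordered i' j' ?_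
      simp only [Fin.lt_def, Fin.coe_castAdd] at hij ⊢
      exact hij
    · rw [hb_left, ha_right]
      have h1 := hCD i'
      have h2 := W₂.a_pos j'
      linarith
    · exfalso
      simp only [Fin.lt_def, Fin.coe_natAdd, Fin.coe_castAdd] at hij
      omega
    · rw [hb_right, ha_right]
      have hij' : i' < j' := by
        simp only [Fin.lt_def, Fin.coe_natAdd] at hij ⊢
        omega
      have := W₂.ordered i' j' hij'
      linarith
  · rintro (u | u) (v | v) huv
    · -- inl, inl
      have huv' : u ≠ v := fun h => huv (by rw [h])
      rw [show (G₁ ⊕g G₂).Adj (Sum.inl u) (Sum.inl v) ↔ G₁.Adj u v by simp]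
      rw [W₁.adj_iff u v huv']
      have hs : w (Sum.inl u) + w (Sum.inl v) = W₁.w u + W₁.w v := by
        simp [hwdef]
      rw [hs]
      constructor
      · rintro ⟨i, h1, h2⟩
        exact ⟨Fin.castAdd k₂ i, by rw [ha_left]; exact h1, by rw [hb_left]; exact h2⟩
      · rintro ⟨i, h1, h2⟩
        refine Fin.addCases (fun i' => ?_) (fun j' => ?_) i h1 h2 <;> intro h1 h2
        · exact ⟨i', by rwa [ha_left] at h1, by rwa [hb_left] at h2⟩
        · exfalso
          rw [ha_right] at h1
          have hu := hB1 u
          have hv := hB1 v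
          have := W₂.a_pos j'
          linarith
    · -- inl, inr : no edge, and sum avoids all intervals
      constructor
      · intro h; exact absurd h (by simp)
      · rintro ⟨i, h1, h2⟩
        exfalso
        have hs : w (Sum.inl u) + w (Sum.inr v) = W₁.w u + W₂.w v + C := by
          simp [hwdef]; ring
        rw [hs] at h1 h2
        refine Fin.addCases (fun i' => ?_) (fun j' => ?_) i h1 h2 <;> intro h1 h2
        · rw [hb_left] at h2
          have := hCD i'
          have := W₁.w_pos u
          have := W₂.w_pos v
          linarith
        · rw [ha_right] at h1
          have hu := hB1 u
          have hv := hB2 v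
          have := W₂.a_pos j'
          linarith
    · -- inr, inl
      constructor
      · intro h; exact absurd h (by simp)
      · rintro ⟨i, h1, h2⟩
        exfalso
        have hs : w (Sum.inr u) + w (Sum.inl v) = W₁.w v + W₂.w u + C := by
          simp [hwdef]; ring
        rw [hs] at h1 h2
        refine Fin.addCases (fun i' => ?_) (fun j' => ?_) i h1 h2 <;> intro h1 h2
        · rw [hb_left] at h2
          have := hCD i'
          have := W₁.w_pos v
          have := W₂.w_pos u
          linarith
        · rw [ha_right] at h1
          have hu := hB1 v
          have hv := hB2 u
          have := W₂.a_pos j'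
          linarith
    · -- inr, inr
      have huv' : u ≠ v := fun h => huv (by rw [h])
      rw [show (G₁ ⊕g G₂).Adj (Sum.inr u) (Sum.inr v) ↔ G₂.Adj u v by simp]
      rw [W₂.adj_iff u v huv']
      have hs : w (Sum.inr u) + w (Sum.inr v) = W₂.w u + W₂.w v + 2 * C := by
        simp [hwdef]; ring
      rw [hs]
      constructor
      · rintro ⟨i, h1, h2⟩
        refine ⟨Fin.natAdd k₁ i, ?_, ?_⟩
        · rw [ha_right]; linarith
        · rw [hb_right]; linarith
      · rintro ⟨i, h1, h2⟩
        refine Fin.addCases (fun i' => ?_) (fun j' => ?_) i h1 h2 <;> intro h1 h2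
        · exfalso
          rw [hb_left] at h2
          have := hCD i'
          have := W₂.w_pos u
          have := W₂.w_pos v
          linarith
        · rw [ha_right] at h1
          rw [hb_right] at h2
          exact ⟨j', by linarith, by linarith⟩

/-- The star number of the disjoint union of two graphs is at most the sum of their
star numbers. -/
theorem stmt_19 {V₁ V₂ : Type*} [Fintype V₁] [Fintype V₂]
    (G₁ : SimpleGraph V₁) (G₂ : SimpleGraph V₂) :
    starNumber (G₁ ⊕g G₂) ≤ starNumber G₁ + starNumber G₂ := by
  have hne₁ : {k | 0 < k ∧ Nonempty (StarWitness G₁ k)}.Nonempty :=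
    star_exists_witness G₁
  have hne₂ : {k | 0 < k ∧ Nonempty (StarWitness G₂ k)}.Nonempty :=
    star_exists_witness G₂
  obtain ⟨hk₁, ⟨Wit₁⟩⟩ := Nat.sInf_mem hne₁
  obtain ⟨hk₂, ⟨Wit₂⟩⟩ := Nat.sInf_mem hne₂
  show sInf _ ≤ sInf _ + sInf _
  exact Nat.sInf_le ⟨by omega, star_combine Wit₁ Wit₂⟩
end
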